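/- Let ▷ be a symmetric left partial action of a Hopf algebra H on a generalized matrix algebra R = (iMj) such that each ι_ij(iMj) is H-invariant. Then for each pair (i,j), the map π_ij : H → End(iMj) defined by π_ij(h)(m) = ι_ij⁻¹(h ▷ ι_ij(m)) is a partial representation of H. -/

import Mathlib

open TensorProduct

section GMD

variable {k : Type*} [Field k] {n : ℕ}
variable (M : Fin n → Fin n → Type*) [∀ i j, AddCommGroup (M i j)] [∀ i j, Module k (M i j)]
variable (θ : ∀ i j l : Fin n, M i j →ₗ[k] M j l →ₗ[k] M i l)
variable (e : ∀ i, M i i)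

/-- A generalized matrix datum: the bilinear products `θ i j l` are associative and
the elements `e i = η_i(1)` are units. -/
structure IsGMDatum : Prop where
  assoc : ∀ (i j l m : Fin n) (x : M i j) (y : M j l) (z : M l m),
    θ i l m (θ i j l x y) z = θ i j m x (θ j l m y z)
  one_mul : ∀ (i j : Fin n) (x : M i j), θ i i j (e i) x = x
  mul_one : ∀ (i j : Fin n) (x : M i j), θ i j j x (e j) = x

/-- The underlying space of the generalized matrix algebra `R = ⊕_{i,j} M i j`. -/
abbrev gmaSpace := ∀ p : Fin n × Fin n, M p.1 p.2

/-- Row-column multiplication on the generalized matrix algebra. -/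
def gmaMul (x y : gmaSpace M) : gmaSpace M :=
  fun p => ∑ l, θ p.1 l p.2 (x (p.1, l)) (y (l, p.2))

/-- The unit `Σ_i ι_ii (e i)` of the generalized matrix algebra. -/
noncomputable def gmaOne : gmaSpace M :=
  ∑ i, Pi.single (M := fun p : Fin n × Fin n => M p.1 p.2) (i, i) (e i)

end GMD
/-- Sweedler-style sum `h ↦ Σ f(h₍₁₎) * g(h₍₂₎)` with respect to a bilinear
multiplication `mul`. -/
noncomputable def sweedler {k H B : Type*} [CommRing k] [Ring H] [HopfAlgebra k H]
    [AddCommGroup B] [Module k B]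
    (mul : B →ₗ[k] B →ₗ[k] B) (f g : H →ₗ[k] B) : H →ₗ[k] B :=
  TensorProduct.lift ((mul ∘ₗ f).compl₂ g) ∘ₗ Coalgebra.comul

/-- A symmetric left partial action of a Hopf algebra `H` on a (not necessarily
unital-typeclass) algebra `(A, mulA, oneA)`: (LPA1) `1_H·a = a`;
(LPA2) `h·(ab) = (h₍₁₎·a)(h₍₂₎·b)`;
(LPA3) `h·(g·a) = (h₍₁₎·1)(h₍₂₎g·a) = (h₍₁₎g·a)(h₍₂₎·1)`. -/
structure IsLeftPartialActionOn (k : Type*) {H A : Type*} [CommRing k] [Ring H]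
    [HopfAlgebra k H] [AddCommGroup A] [Module k A]
    (mulA : A →ₗ[k] A →ₗ[k] A) (oneA : A) (act : H →ₗ[k] A →ₗ[k] A) : Prop where
  lpa1 : ∀ a : A, act 1 a = a
  lpa2 : ∀ (h : H) (a b : A),
    act h (mulA a b) = sweedler mulA (act.flip a) (act.flip b) h
  lpa3 : ∀ (h g : H) (a : A),
    act h (act g a) =
      sweedler mulA (act.flip oneA) ((act.flip a) ∘ₗ LinearMap.mulRight k g) h
  lpa3' : ∀ (h g : H) (a : A),
    act h (act g a) =
      sweedler mulA ((act.flip a) ∘ₗ LinearMap.mulRight k g) (act.flip oneA) h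

section GMA

variable {k : Type*} [Field k] {n : ℕ}
variable (M : Fin n → Fin n → Type*) [∀ i j, AddCommGroup (M i j)] [∀ i j, Module k (M i j)]
variable (θ : ∀ i j l : Fin n, M i j →ₗ[k] M j l →ₗ[k] M i l)

/-- The multiplication of the generalized matrix algebra, as a bilinear map. -/
noncomputable def gmaMulL : gmaSpace M →ₗ[k] gmaSpace M →ₗ[k] gmaSpace M :=
  LinearMap.mk₂ k (gmaMul M θ)
    (fun x x' y => by
      funext p; simp [gmaMul, map_add, LinearMap.add_apply, Finset.sum_add_distrib])
    (fun c x y => by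
      funext p; simp [gmaMul, Finset.smul_sum])
    (fun x y y' => by
      funext p; simp [gmaMul, map_add, LinearMap.add_apply, Finset.sum_add_distrib])
    (fun c x y => by
      funext p; simp [gmaMul, Finset.smul_sum])

/-- The canonical inclusion `ι_ij : M i j → R` of a component into the generalized
matrix algebra. -/
noncomputable def gmaIncl (i j : Fin n) : M i j →ₗ[k] gmaSpace M :=
  LinearMap.single k (fun p : Fin n × Fin n => M p.1 p.2) (i, j)

variable {H : Type*} [Ring H] [HopfAlgebra k H]

/-- The restriction `π_ij(h)(m) = ι_ij⁻¹(h ▷ ι_ij(m))` of a partial action on the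
generalized matrix algebra to the component `M i j`. -/
noncomputable def actRestrict (act : H →ₗ[k] gmaSpace M →ₗ[k] gmaSpace M)
    (i j : Fin n) : H →ₗ[k] M i j →ₗ[k] M i j where
  toFun h := (LinearMap.proj (i, j)) ∘ₗ (act h) ∘ₗ (gmaIncl M i j)
  map_add' h h' := by ext m; simp
  map_smul' c h := by ext m; simp

end GMA

/-- A partial representation of a Hopf algebra `H` in a unital algebra `B`:
(PR1) `π(1) = 1`; (PR2) `π(h)π(k₍₁₎)π(S(k₍₂₎)) = π(hk₍₁₎)π(S(k₍₂₎))`;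
(PR3) `π(h₍₁₎)π(S(h₍₂₎))π(g) = π(h₍₁₎)π(S(h₍₂₎)g)`. -/
structure IsPartialRep (k : Type*) {H B : Type*} [CommRing k] [Ring H] [HopfAlgebra k H]
    [Ring B] [Algebra k B] (π : H →ₗ[k] B) : Prop where
  pr1 : π 1 = 1
  pr2 : ∀ h kk : H,
    sweedler (LinearMap.mul k B) ((LinearMap.mulLeft k (π h)) ∘ₗ π)
      (π ∘ₗ (HopfAlgebra.antipode k : H →ₗ[k] H)) kk =
    sweedler (LinearMap.mul k B) (π ∘ₗ LinearMap.mulLeft k h)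
      (π ∘ₗ (HopfAlgebra.antipode k : H →ₗ[k] H)) kk
  pr3 : ∀ h g : H,
    sweedler (LinearMap.mul k B) π (π ∘ₗ (HopfAlgebra.antipode k : H →ₗ[k] H)) h * π g =
    sweedler (LinearMap.mul k B) π
      (π ∘ₗ LinearMap.mulRight k g ∘ₗ (HopfAlgebra.antipode k : H →ₗ[k] H)) h

/-!
By LPA3, `x·(y·a) = (x₍₁₎·1)(x₍₂₎y·a)`, so every sum of iterated actions is the pairing
`x ⊗ y ↦ (x·1)(y·a)` evaluated on an element of the algebra `H ⊗ H`. Combined with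
`h₍₁₎ ⊗ h₍₂₎S(h₍₃₎) = h ⊗ 1`, this shows that the action `h ↦ (a ↦ h·a)` on `R` is itself a partial
representation in `End R`: both sides of PR3 become `a ↦ (h·1)(g·a)`, and both sides of PR2 become
`a ↦ (h₍₁₎k·1)(h₍₂₎·a)`, the left one via LPA2, the symmetric form of LPA3 and the associativity and
unit of `R`. Invariance of `ι_ij(M i j)` means that `ι_ij` intertwines `π_ij` with this action, and
the identities descend to `π_ij` since `ι_ij` is injective.
-/

open Coalgebra

section Sweedler

variable {k H : Type*} [CommRing k] [Ring H] [HopfAlgebra k H]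

local notation "S" => (HopfAlgebra.antipode k : H →ₗ[k] H)

theorem sweedler_eq_sum {B : Type*} [AddCommGroup B] [Module k B]
    (mul : B →ₗ[k] B →ₗ[k] B) (f g : H →ₗ[k] B) {h : H} {ι : Type*} (r : Repr k h ι) :
    sweedler mul f g h = ∑ i ∈ r.index, mul (f (r.left i)) (g (r.right i)) := by
  simp [sweedler, ← r.eq]

theorem sweedler_mulLeft_comp {B : Type*} [Ring B] [Algebra k B] (x : B) (f g : H →ₗ[k] B) :
    sweedler (LinearMap.mul k B) (LinearMap.mulLeft k x ∘ₗ f) g =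
      LinearMap.mulLeft k x ∘ₗ sweedler (LinearMap.mul k B) f g := by
  ext h
  simp [sweedler_eq_sum _ _ _ (ℛ k h), mul_assoc]

/-- `h₍₁₎ ⊗ h₍₂₎ S(h₍₃₎) = h ⊗ 1`. -/
theorem sum_comul_mul_one_tmul_antipode {h : H} {ι : Type*} (r : Repr k h ι) :
    ∑ i ∈ r.index, comul (r.left i) * (1 ⊗ₜ[k] S (r.right i)) = h ⊗ₜ[k] (1 : H) := by
  have coassoc := congrArg (LinearMap.lTensor H (LinearMap.mul' k H ∘ₗ LinearMap.lTensor H S))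
    (sum_tmul_tmul_eq r (fun i => ℛ k (r.left i)) (fun i => ℛ k (r.right i)))
  simp only [map_sum, LinearMap.lTensor_tmul, LinearMap.comp_apply, LinearMap.mul'_apply,
    ← TensorProduct.tmul_sum, HopfAlgebra.sum_mul_antipode_eq_smul] at coassoc
  calc ∑ i ∈ r.index, comul (r.left i) * (1 ⊗ₜ[k] S (r.right i))
      = ∑ i ∈ r.index, r.left i ⊗ₜ[k] (counit (R := k) (r.right i) • (1 : H)) := by
        rw [← coassoc]
        simp [← (ℛ k _).eq, Finset.sum_mul, Algebra.TensorProduct.tmul_mul_tmul]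
    _ = (∑ i ∈ r.index, counit (R := k) (r.right i) • r.left i) ⊗ₜ[k] 1 := by
        simp only [TensorProduct.tmul_smul, TensorProduct.smul_tmul', TensorProduct.sum_tmul]
    _ = h ⊗ₜ[k] 1 := by
        have counit_right := congrArg (TensorProduct.rid k H) (sum_tmul_counit_eq r)
        simp only [map_sum, TensorProduct.rid_tmul, one_smul] at counit_right
        rw [counit_right]

end Sweedler

noncomputable def actPairing {k H A : Type*} [CommRing k] [Ring H] [HopfAlgebra k H]
    [AddCommGroup A] [Module k A] (mulA : A →ₗ[k] A →ₗ[k] A) (oneA : A)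
    (act : H →ₗ[k] A →ₗ[k] A) (a : A) : H ⊗[k] H →ₗ[k] A :=
  TensorProduct.lift ((mulA ∘ₗ act.flip oneA).compl₂ (act.flip a))

theorem actPairing_tmul {k H A : Type*} [CommRing k] [Ring H] [HopfAlgebra k H]
    [AddCommGroup A] [Module k A] (mulA : A →ₗ[k] A →ₗ[k] A) (oneA : A)
    (act : H →ₗ[k] A →ₗ[k] A) (a : A) (x y : H) :
    actPairing mulA oneA act a (x ⊗ₜ y) = mulA (act x oneA) (act y a) := rfl

namespace IsLeftPartialActionOn

variable {k H A : Type*} [CommRing k] [Ring H] [HopfAlgebra k H] [AddCommGroup A] [Module k A]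
  {mulA : A →ₗ[k] A →ₗ[k] A} {oneA : A} {act : H →ₗ[k] A →ₗ[k] A}

local notation "S" => (HopfAlgebra.antipode k : H →ₗ[k] H)

theorem act_one (hact : IsLeftPartialActionOn k mulA oneA act) : act 1 = 1 :=
  LinearMap.ext hact.lpa1

theorem act_act_eq_actPairing (hact : IsLeftPartialActionOn k mulA oneA act) (x y : H) (a : A) :
    act x (act y a) = actPairing mulA oneA act a (comul x * (1 ⊗ₜ y)) := by
  rw [hact.lpa3, sweedler_eq_sum _ _ _ (ℛ k x), ← (ℛ k x).eq, Finset.sum_mul, map_sum]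
  simp [actPairing, Algebra.TensorProduct.tmul_mul_tmul]

theorem sum_act_act_antipode_mul (hact : IsLeftPartialActionOn k mulA oneA act) {h : H}
    {ι : Type*} (r : Repr k h ι) (g : H) (a : A) :
    ∑ i ∈ r.index, act (r.left i) (act (S (r.right i) * g) a) = mulA (act h oneA) (act g a) := by
  have split (x : H) : (1 : H) ⊗ₜ[k] (S x * g) = (1 ⊗ₜ S x) * (1 ⊗ₜ g) := by
    simp [Algebra.TensorProduct.tmul_mul_tmul]
  simp_rw [hact.act_act_eq_actPairing, split, ← mul_assoc, ← map_sum, ← Finset.sum_mul,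
    sum_comul_mul_one_tmul_antipode, Algebra.TensorProduct.tmul_mul_tmul, one_mul, mul_one,
    actPairing_tmul]

theorem sweedler_act_antipode_mul (hact : IsLeftPartialActionOn k mulA oneA act) (h g : H) :
    sweedler (LinearMap.mul k (Module.End k A)) act (act ∘ₗ LinearMap.mulRight k g ∘ₗ S) h =
      mulA (act h oneA) * act g := by
  ext a
  simpa [sweedler_eq_sum _ _ _ (ℛ k h)] using hact.sum_act_act_antipode_mul (ℛ k h) g a

theorem sweedler_act_antipode (hact : IsLeftPartialActionOn k mulA oneA act) (h : H) :
    sweedler (LinearMap.mul k (Module.End k A)) act (act ∘ₗ S) h = mulA (act h oneA) := by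
  simpa [LinearMap.mulRight_one, hact.act_one] using hact.sweedler_act_antipode_mul h 1

theorem sweedler_act_mulLeft_antipode_apply (hact : IsLeftPartialActionOn k mulA oneA act)
    (h g : H) (a : A) :
    sweedler (LinearMap.mul k (Module.End k A)) (act ∘ₗ LinearMap.mulLeft k h) (act ∘ₗ S) g a =
      actPairing mulA oneA act a (comul h * (g ⊗ₜ 1)) := by
  rw [sweedler_eq_sum _ _ _ (ℛ k g)]
  simp only [LinearMap.sum_apply, LinearMap.mul_apply', Module.End.mul_apply,
    LinearMap.comp_apply, LinearMap.mulLeft_apply]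
  simp_rw [hact.act_act_eq_actPairing, Bialgebra.comul_mul, mul_assoc, ← map_sum,
    ← Finset.mul_sum, sum_comul_mul_one_tmul_antipode]

theorem act_mul_act_one (hact : IsLeftPartialActionOn k mulA oneA act)
    (hassoc : ∀ a b c : A, mulA (mulA a b) c = mulA a (mulA b c))
    (hone : ∀ a : A, mulA oneA a = a) (h g : H) (a : A) :
    act h (mulA (act g oneA) a) = actPairing mulA oneA act a (comul h * (g ⊗ₜ 1)) := by
  let r := ℛ k h
  have act_act_one (x : H) : act x (act g oneA) = ∑ j ∈ (ℛ k x).index,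
      mulA (act ((ℛ k x).left j * g) oneA) (act ((ℛ k x).right j) oneA) := by
    rw [hact.lpa3', sweedler_eq_sum _ _ _ (ℛ k x)]
    rfl
  have act_eq_sum (x : H) : act x a = ∑ j ∈ (ℛ k x).index,
      mulA (act ((ℛ k x).left j) oneA) (act ((ℛ k x).right j) a) := by
    conv_lhs => rw [← hone a, hact.lpa2, sweedler_eq_sum _ _ _ (ℛ k x)]
    rfl
  have coassoc := congrArg (TensorProduct.lift
    ((mulA ∘ₗ act.flip oneA ∘ₗ LinearMap.mulRight k g).compl₂ (actPairing mulA oneA act a)))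
    (sum_tmul_tmul_eq r (fun i => ℛ k (r.left i)) (fun i => ℛ k (r.right i)))
  simp only [map_sum, TensorProduct.lift.tmul, LinearMap.compl₂_apply, LinearMap.comp_apply,
    LinearMap.flip_apply, LinearMap.mulRight_apply, actPairing_tmul] at coassoc
  calc act h (mulA (act g oneA) a)
      = ∑ i ∈ r.index, mulA (act (r.left i) (act g oneA)) (act (r.right i) a) := by
        rw [hact.lpa2, sweedler_eq_sum _ _ _ r]
        rfl
    _ = ∑ i ∈ r.index, ∑ j ∈ (ℛ k (r.left i)).index,
          mulA (act ((ℛ k (r.left i)).left j * g) oneA)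
            (mulA (act ((ℛ k (r.left i)).right j) oneA) (act (r.right i) a)) := by
        simp_rw [act_act_one, map_sum, LinearMap.sum_apply, hassoc]
    _ = ∑ i ∈ r.index, ∑ j ∈ (ℛ k (r.right i)).index,
          mulA (act (r.left i * g) oneA)
            (mulA (act ((ℛ k (r.right i)).left j) oneA) (act ((ℛ k (r.right i)).right j) a)) :=
        coassoc
    _ = ∑ i ∈ r.index, mulA (act (r.left i * g) oneA) (act (r.right i) a) := by
        simp_rw [← map_sum, ← act_eq_sum]
    _ = actPairing mulA oneA act a (comul h * (g ⊗ₜ 1)) := by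
        rw [← r.eq, Finset.sum_mul, map_sum]
        simp [Algebra.TensorProduct.tmul_mul_tmul, actPairing]

theorem isPartialRep (hact : IsLeftPartialActionOn k mulA oneA act)
    (hassoc : ∀ a b c : A, mulA (mulA a b) c = mulA a (mulA b c))
    (hone : ∀ a : A, mulA oneA a = a) :
    IsPartialRep k (act : H →ₗ[k] Module.End k A) where
  pr1 := hact.act_one
  pr2 h g := by
    ext a
    rw [sweedler_mulLeft_comp, hact.sweedler_act_mulLeft_antipode_apply, LinearMap.comp_apply,
      hact.sweedler_act_antipode, LinearMap.mulLeft_apply, Module.End.mul_apply,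
      hact.act_mul_act_one hassoc hone]
  pr3 h g := by
    rw [hact.sweedler_act_antipode, hact.sweedler_act_antipode_mul]

end IsLeftPartialActionOn

section Intertwining

variable {k H N A : Type*} [CommRing k] [Ring H] [HopfAlgebra k H]
  [AddCommGroup N] [Module k N] [AddCommGroup A] [Module k A] (ι : N →ₗ[k] A)

theorem comp_sweedler_mul {f g : H →ₗ[k] Module.End k N} {f' g' : H →ₗ[k] Module.End k A}
    (hf : ∀ x m, ι (f x m) = f' x (ι m)) (hg : ∀ x m, ι (g x m) = g' x (ι m)) (h : H) :
    ι ∘ₗ sweedler (LinearMap.mul k _) f g h = sweedler (LinearMap.mul k _) f' g' h ∘ₗ ι := by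
  ext m
  simp [sweedler_eq_sum _ _ _ (ℛ k h), hf, hg]

theorem IsPartialRep.of_injective {π : H →ₗ[k] Module.End k A} {ρ : H →ₗ[k] Module.End k N}
    (hπ : IsPartialRep k π) (hι : Function.Injective ι) (hρ : ∀ h m, ι (ρ h m) = π h (ι m)) :
    IsPartialRep k ρ := by
  have hS (x : H) (m : N) : ι ((ρ ∘ₗ HopfAlgebra.antipode k) x m) =
      (π ∘ₗ HopfAlgebra.antipode k) x (ι m) := hρ _ m
  refine ⟨?_, fun h g => ?_, fun h g => ?_⟩
  · ext m
    apply hι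
    simpa [hρ] using congr($(hπ.pr1) (ι m))
  · refine (LinearMap.cancel_left hι).mp ?_
    rw [comp_sweedler_mul ι (f' := LinearMap.mulLeft k (π h) ∘ₗ π) (by simp [hρ]) hS,
      comp_sweedler_mul ι (f' := π ∘ₗ LinearMap.mulLeft k h) (by simp [hρ]) hS, hπ.pr2]
  · refine (LinearMap.cancel_left hι).mp ?_
    rw [Module.End.mul_eq_comp, ← LinearMap.comp_assoc, comp_sweedler_mul ι hρ hS,
      comp_sweedler_mul ι hρ (g' := π ∘ₗ LinearMap.mulRight k g ∘ₗ HopfAlgebra.antipode k)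
        (by simp [hρ]), LinearMap.comp_assoc, ← hπ.pr3]
    ext m
    simp [hρ]

end Intertwining

section GMA

variable {k : Type*} [Field k] {n : ℕ}
  {M : Fin n → Fin n → Type*} [∀ i j, AddCommGroup (M i j)] [∀ i j, Module k (M i j)]
  {θ : ∀ i j l : Fin n, M i j →ₗ[k] M j l →ₗ[k] M i l} {e : ∀ i, M i i}

theorem gmaOne_apply_self (i : Fin n) : gmaOne M e (i, i) = e i := by
  classical
  rw [gmaOne, Finset.sum_apply, Finset.sum_eq_single i (fun l _ hl => ?_) (by simp)]
  · simp
  · exact Pi.single_eq_of_ne (fun h => hl (congrArg Prod.fst h).symm) _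

theorem gmaOne_apply_of_ne {p : Fin n × Fin n} (hp : p.1 ≠ p.2) : gmaOne M e p = 0 := by
  classical
  rw [gmaOne, Finset.sum_apply]
  exact Finset.sum_eq_zero fun l _ => Pi.single_eq_of_ne (fun h => hp (by rw [h])) _

theorem gmaMulL_gmaOne (hd : IsGMDatum M θ e) (x : gmaSpace M) :
    gmaMulL M θ (gmaOne M e) x = x := by
  funext p
  change ∑ l, θ p.1 l p.2 (gmaOne M e (p.1, l)) (x (l, p.2)) = x p
  rw [Finset.sum_eq_single p.1 (fun l _ hl => ?_) (by simp), gmaOne_apply_self, hd.one_mul]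
  rw [gmaOne_apply_of_ne (Ne.symm hl), map_zero, LinearMap.zero_apply]

theorem gmaMulL_assoc (hd : IsGMDatum M θ e) (x y z : gmaSpace M) :
    gmaMulL M θ (gmaMulL M θ x y) z = gmaMulL M θ x (gmaMulL M θ y z) := by
  funext p
  change ∑ l, θ _ _ _ (∑ m, θ _ _ _ (x (p.1, m)) (y (m, l))) (z (l, p.2)) =
    ∑ m, θ _ _ _ (x (p.1, m)) (∑ l, θ _ _ _ (y (m, l)) (z (l, p.2)))
  simp only [map_sum, LinearMap.sum_apply, hd.assoc]
  exact Finset.sum_comm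

theorem gmaIncl_injective (i j : Fin n) : Function.Injective (gmaIncl (k := k) M i j) :=
  fun a b hab => by simpa [gmaIncl] using congr_fun hab (i, j)

theorem gmaIncl_actRestrict {H : Type*} [Ring H] [HopfAlgebra k H]
    {act : H →ₗ[k] gmaSpace M →ₗ[k] gmaSpace M} {i j : Fin n}
    (hinv : ∀ (h : H) (m : M i j),
      act h (gmaIncl (k := k) M i j m) ∈ LinearMap.range (gmaIncl (k := k) M i j))
    (h : H) (m : M i j) :
    gmaIncl (k := k) M i j (actRestrict M act i j h m) = act h (gmaIncl (k := k) M i j m) := by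
  obtain ⟨m', hm'⟩ := hinv h m
  change gmaIncl M i j (act h (gmaIncl M i j m) (i, j)) = _
  rw [← hm']
  simp [gmaIncl]

end GMA

/-- If a Hopf algebra `H` acts partially on the generalized matrix
algebra `R = (M i j)` leaving each `ι_ij(M i j)` invariant, then for each pair `(i,j)`
the map `π_ij : H → End(M i j)`, `π_ij(h)(m) = ι_ij⁻¹(h ▷ ι_ij(m))`, is a partial
representation of `H`. -/
theorem gma_restriction_isPartialRep
    {k : Type*} [Field k] {n : ℕ}
    (M : Fin n → Fin n → Type*) [∀ i j, AddCommGroup (M i j)] [∀ i j, Module k (M i j)]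
    (θ : ∀ i j l : Fin n, M i j →ₗ[k] M j l →ₗ[k] M i l)
    (e : ∀ i, M i i) (hd : IsGMDatum M θ e)
    {H : Type*} [Ring H] [HopfAlgebra k H]
    (act : H →ₗ[k] gmaSpace M →ₗ[k] gmaSpace M)
    (hact : IsLeftPartialActionOn k (gmaMulL M θ) (gmaOne M e) act)
    (hinv : ∀ (i j : Fin n) (h : H) (m : M i j),
      act h (gmaIncl (k := k) M i j m) ∈ LinearMap.range (gmaIncl (k := k) M i j))
    (i j : Fin n) :
    IsPartialRep k (actRestrict M act i j : H →ₗ[k] Module.End k (M i j)) :=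
  (hact.isPartialRep (gmaMulL_assoc hd) (gmaMulL_gmaOne hd)).of_injective (gmaIncl M i j)
    (gmaIncl_injective i j) (gmaIncl_actRestrict (hinv i j))
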